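/- arXiv:2501.04913 — 2 statements merged into one kernel-verified Lean document; each statement's English description precedes it below -/
import Mathlib

section
/- Let Σ ∈ P(d) be symmetric positive definite and let λ ∈ ℝ. The matrix Σ^{-1} ⊗ Σ^{-1} − λ·vec(Σ^{-1}) vec(Σ^{-1})^T is positive definite if and only if 1 − λ·d > 0, i.e. λ < 1/d. In particular, for λ = α²/d with 0 ≤ α < 1 it is positive definite. -/
open Matrix Kronecker

/-- Column-stacking vectorization of a matrix: `vec A (j, i) = A i j`. -/
def vec {m n : Type*} (A : Matrix m n ℝ) : n × m → ℝ := fun p => A p.2 p.1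

/-!
Write `K = Σ⁻¹ ⊗ Σ⁻¹`, `v = vec Σ⁻¹`, `a = K⁻¹ v` and `c = vᵀ a`. Since `v ⬝ x = aᵀ K x`,
Cauchy–Schwarz for the inner product defined by `K` gives `(v ⬝ x)² ≤ c · xᵀ K x`, so the
quadratic form `xᵀ K x - λ (v ⬝ x)²` is positive for `x ≠ 0` as soon as `λ c < 1`; at `x = a` it
equals `c (1 - λ c)`, which gives the converse. Finally `K⁻¹ v = vec Σ`, so
`c = tr (Σ⁻¹ Σ) = d`.
-/

theorem vec_eq_matrix_vec {m n : Type*} (A : Matrix m n ℝ) : _root_.vec A = Matrix.vec A := rfl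

namespace Matrix

section Kronecker

variable {m R : Type*} [Fintype m] [DecidableEq m] [CommRing R]

theorem vec_dotProduct_inv_kronecker_mulVec_vec {A : Matrix m m R} (hA : IsUnit A.det) :
    vec A ⬝ᵥ (A ⊗ₖ A)⁻¹ *ᵥ vec A = Fintype.card m := by
  rw [inv_kronecker, kronecker_mulVec_vec, Matrix.mul_assoc,
    nonsing_inv_mul_cancel_left (A := A) _ hA, vec_dotProduct_vec, ← transpose_mul,
    trace_transpose, nonsing_inv_mul _ hA, trace_one]

end Kronecker

variable {n : Type*}

theorem IsHermitian.sub_smul_vecMulVec {K : Matrix n n ℝ} (hK : K.IsHermitian) (v : n → ℝ)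
    (lam : ℝ) : (K - lam • vecMulVec v v).IsHermitian := by
  have hv : (vecMulVec v v).IsHermitian :=
    IsHermitian.ext fun i j => by simp [vecMulVec_apply, mul_comm]
  exact hK.sub (hv.smul (IsSelfAdjoint.all lam))

variable [Fintype n]

theorem PosSemidef.dotProduct_mulVec_sq_le {K : Matrix n n ℝ} (hK : K.PosSemidef)
    (x y : n → ℝ) : (x ⬝ᵥ K *ᵥ y) ^ 2 ≤ (x ⬝ᵥ K *ᵥ x) * (y ⬝ᵥ K *ᵥ y) := by
  let _ := K.toSeminormedAddCommGroup hK
  let _ := K.toInnerProductSpace hK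
  have h : (K *ᵥ y ⬝ᵥ star x) * (K *ᵥ y ⬝ᵥ star x) ≤ (K *ᵥ x ⬝ᵥ star x) * (K *ᵥ y ⬝ᵥ star y) :=
    real_inner_mul_inner_self_le x y
  simpa only [star_trivial, dotProduct_comm _ x, dotProduct_comm _ y, sq] using h

theorem dotProduct_sub_smul_vecMulVec_mulVec {R : Type*} [CommRing R] (K : Matrix n n R)
    (v x : n → R) (lam : R) :
    x ⬝ᵥ (K - lam • vecMulVec v v) *ᵥ x = x ⬝ᵥ K *ᵥ x - lam * (v ⬝ᵥ x) ^ 2 := by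
  rw [sub_mulVec, smul_mulVec, vecMulVec_mulVec, dotProduct_sub, dotProduct_smul, dotProduct_smul]
  simp only [op_smul_eq_smul, smul_eq_mul, dotProduct_comm x v]
  ring

theorem PosDef.sub_smul_vecMulVec_iff [DecidableEq n] {K : Matrix n n ℝ} (hK : K.PosDef)
    (v : n → ℝ) (lam : ℝ) :
    (K - lam • vecMulVec v v).PosDef ↔ 0 < 1 - lam * (v ⬝ᵥ K⁻¹ *ᵥ v) := by
  set a := K⁻¹ *ᵥ v
  have hKa : K *ᵥ a = v := by
    rw [mulVec_mulVec, mul_nonsing_inv _ ((isUnit_iff_isUnit_det _).1 hK.isUnit), one_mulVec]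
  have hdot_Ka (x : n → ℝ) : x ⬝ᵥ K *ᵥ a = v ⬝ᵥ x := by rw [hKa, dotProduct_comm]
  rw [posDef_iff_dotProduct_mulVec]
  simp only [star_trivial, dotProduct_sub_smul_vecMulVec_mulVec]
  constructor
  · rintro ⟨-, hpos⟩
    by_cases ha : a = 0
    · simp [ha]
    have hc : 0 < v ⬝ᵥ a := by simpa [star_trivial, hdot_Ka] using hK.dotProduct_mulVec_pos ha
    have h := hpos ha
    rw [hdot_Ka] at h
    nlinarith
  · refine fun h => ⟨hK.isHermitian.sub_smul_vecMulVec v lam, fun x hx => ?_⟩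
    have hKx : 0 < x ⬝ᵥ K *ᵥ x := by simpa only [star_trivial] using hK.dotProduct_mulVec_pos hx
    have hCS := hK.posSemidef.dotProduct_mulVec_sq_le x a
    rw [hdot_Ka, hdot_Ka] at hCS
    rcases le_or_gt lam 0 with hlam | hlam
    · nlinarith [sq_nonneg (v ⬝ᵥ x)]
    · nlinarith [mul_le_mul_of_nonneg_left hCS hlam.le]

end Matrix

theorem rank_one_perturbation_posDef {d : ℕ} (S : Matrix (Fin d) (Fin d) ℝ)
    (hS : S.PosDef) (lam : ℝ) :
    ((S⁻¹ ⊗ₖ S⁻¹ - lam • vecMulVec (_root_.vec S⁻¹) (_root_.vec S⁻¹)).PosDef ↔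
      0 < 1 - lam * (d : ℝ)) ∧
    (∀ α : ℝ, 0 ≤ α → α < 1 →
      (S⁻¹ ⊗ₖ S⁻¹ - (α ^ 2 / (d : ℝ)) • vecMulVec (_root_.vec S⁻¹) (_root_.vec S⁻¹)).PosDef) := by
  have hc : _root_.vec S⁻¹ ⬝ᵥ (S⁻¹ ⊗ₖ S⁻¹)⁻¹ *ᵥ _root_.vec S⁻¹ = d := by
    rw [vec_eq_matrix_vec, vec_dotProduct_inv_kronecker_mulVec_vec
      ((isUnit_iff_isUnit_det _).1 hS.inv.isUnit), Fintype.card_fin]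
  have hiff (μ : ℝ) :
      (S⁻¹ ⊗ₖ S⁻¹ - μ • vecMulVec (_root_.vec S⁻¹) (_root_.vec S⁻¹)).PosDef ↔ 0 < 1 - μ * d :=
    hc ▸ (hS.inv.kronecker hS.inv).sub_smul_vecMulVec_iff _ μ
  refine ⟨hiff lam, fun α hα₀ hα₁ => (hiff _).2 ?_⟩
  rcases eq_or_ne (d : ℝ) 0 with hd | hd
  · simp [hd]
  · rw [div_mul_cancel₀ _ hd]
    nlinarith
end

section
/- Let Σ₁ ∈ P(d₁), Σ₂ ∈ P(d₂), V₁ a symmetric d₁×d₁ matrix and V₂ a symmetric d₂×d₂ matrix. Writing Σ = Σ₁ ⊗ Σ₂ and V = V₁ ⊗ Σ₂ + Σ₁ ⊗ V₂, the affine-invariant inner product satisfies tr(Σ^{-1} V Σ^{-1} V) = d₂·tr(Σ₁^{-1}V₁Σ₁^{-1}V₁) + d₁·tr(Σ₂^{-1}V₂Σ₂^{-1}V₂) + 2·tr(Σ₁^{-1}V₁)·tr(Σ₂^{-1}V₂). -/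
open Matrix Kronecker

theorem kronecker_affine_invariant_norm {d₁ d₂ : ℕ}
    (S₁ : Matrix (Fin d₁) (Fin d₁) ℝ) (S₂ : Matrix (Fin d₂) (Fin d₂) ℝ)
    (h₁ : S₁.PosDef) (h₂ : S₂.PosDef)
    (V₁ : Matrix (Fin d₁) (Fin d₁) ℝ) (V₂ : Matrix (Fin d₂) (Fin d₂) ℝ)
    (hV₁ : V₁.IsSymm) (hV₂ : V₂.IsSymm) :
    ((S₁ ⊗ₖ S₂)⁻¹ * (V₁ ⊗ₖ S₂ + S₁ ⊗ₖ V₂) *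
        (S₁ ⊗ₖ S₂)⁻¹ * (V₁ ⊗ₖ S₂ + S₁ ⊗ₖ V₂)).trace =
      (d₂ : ℝ) * (S₁⁻¹ * V₁ * S₁⁻¹ * V₁).trace +
      (d₁ : ℝ) * (S₂⁻¹ * V₂ * S₂⁻¹ * V₂).trace +
      2 * (S₁⁻¹ * V₁).trace * (S₂⁻¹ * V₂).trace := by
  have e1 : S₁⁻¹ * S₁ = 1 := Matrix.nonsing_inv_mul _ h₁.det_pos.ne'.isUnit
  have e2 : S₂⁻¹ * S₂ = 1 := Matrix.nonsing_inv_mul _ h₂.det_pos.ne'.isUnit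
  have key : (S₁ ⊗ₖ S₂)⁻¹ * (V₁ ⊗ₖ S₂ + S₁ ⊗ₖ V₂) =
      (S₁⁻¹ * V₁) ⊗ₖ (1 : Matrix (Fin d₂) (Fin d₂) ℝ) +
      (1 : Matrix (Fin d₁) (Fin d₁) ℝ) ⊗ₖ (S₂⁻¹ * V₂) := by
    rw [Matrix.inv_kronecker, mul_add, ← Matrix.mul_kronecker_mul,
      ← Matrix.mul_kronecker_mul, e1, e2]
  calc ((S₁ ⊗ₖ S₂)⁻¹ * (V₁ ⊗ₖ S₂ + S₁ ⊗ₖ V₂) *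
        (S₁ ⊗ₖ S₂)⁻¹ * (V₁ ⊗ₖ S₂ + S₁ ⊗ₖ V₂)).trace
      = (((S₁ ⊗ₖ S₂)⁻¹ * (V₁ ⊗ₖ S₂ + S₁ ⊗ₖ V₂)) *
        ((S₁ ⊗ₖ S₂)⁻¹ * (V₁ ⊗ₖ S₂ + S₁ ⊗ₖ V₂))).trace := by
        rw [mul_assoc]
    _ = _ := by
        rw [key, add_mul, mul_add, mul_add, ← Matrix.mul_kronecker_mul,
          ← Matrix.mul_kronecker_mul, ← Matrix.mul_kronecker_mul,
          ← Matrix.mul_kronecker_mul, one_mul, mul_one, one_mul, mul_one]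
        simp only [Matrix.trace_add, Matrix.trace_kronecker, Matrix.trace_one]
        simp [Fintype.card_fin, mul_assoc]
        ring
end
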